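/- arXiv:1609.04178 — 4 statements merged into one kernel-verified Lean document; each statement's English description precedes it below -/
import Mathlib

section
/- For the second-order ENO reconstruction with slope σ_i = Δv_{i-1} if |Δv_{i-1}| < |Δv_i| and σ_i = Δv_i otherwise (where Δv_i = v_{i+1} − v_i), the reconstructed interface jump v⁺_{i+1/2} − v⁻_{i+1/2} = Δv_i − (σ_i + σ_{i+1})/2 has the same sign as Δv_i: it is nonnegative if Δv_i > 0, nonpositive if Δv_i < 0, and zero if Δv_i = 0. -/
/-- First difference of a sequence. -/
def Δ (v : ℤ → ℝ) (i : ℤ) : ℝ := v (i + 1) - v i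

/-- Second-order ENO slope on a uniform unit mesh. -/
noncomputable def enoSlope (v : ℤ → ℝ) (i : ℤ) : ℝ :=
  if |Δ v (i - 1)| < |Δ v i| then Δ v (i - 1) else Δ v i

/-- Reconstructed interface jump `v⁺_{i+1/2} − v⁻_{i+1/2}` for second-order ENO. -/
noncomputable def enoJump (v : ℤ → ℝ) (i : ℤ) : ℝ :=
  Δ v i - (enoSlope v i + enoSlope v (i + 1)) / 2

lemma enoSlope_abs_le (v : ℤ → ℝ) (i : ℤ) : |enoSlope v i| ≤ |Δ v i| := by
  unfold enoSlope
  split_ifs with h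
  · exact le_of_lt h
  · exact le_refl _

lemma enoSlope_abs_le' (v : ℤ → ℝ) (i : ℤ) : |enoSlope v (i + 1)| ≤ |Δ v i| := by
  unfold enoSlope
  have : i + 1 - 1 = i := by ring
  rw [this]
  split_ifs with h
  · exact le_refl _
  · exact not_lt.mp h

/-- Sign property of second-order ENO reconstruction. -/
theorem eno2_sign_property (v : ℤ → ℝ) (i : ℤ) :
    (0 < Δ v i → 0 ≤ enoJump v i) ∧
    (Δ v i < 0 → enoJump v i ≤ 0) ∧
    (Δ v i = 0 → enoJump v i = 0) := by
  have h1 := enoSlope_abs_le v i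
  have h2 := enoSlope_abs_le' v i
  have a1 := abs_le.mp (le_trans (le_refl _) h1)
  have a2 := abs_le.mp (le_trans (le_refl _) h2)
  unfold enoJump
  refine ⟨fun h => ?_, fun h => ?_, fun h => ?_⟩
  · have hd : |Δ v i| = Δ v i := abs_of_pos h
    rw [hd] at a1 a2
    linarith [a1.1, a2.1]
  · have hd : |Δ v i| = -(Δ v i) := abs_of_neg h
    rw [hd] at a1 a2
    linarith [a1.2, a2.2]
  · rw [h] at a1 a2 ⊢
    simp only [abs_zero, neg_zero] at a1 a2
    have : enoSlope v i = 0 := le_antisymm a1.2 a1.1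
    have : enoSlope v (i+1) = 0 := le_antisymm a2.2 a2.1
    simp_all
end

section
/- For the second-order ENO reconstruction on a uniform mesh, the interface jump satisfies the two-sided bound 0 ≤ (v⁺_{i+1/2} − v⁻_{i+1/2}) / Δv_i ≤ 2 whenever Δv_i ≠ 0. -/
/-- Two-sided bound on the relative interface jump of second-order ENO. -/
theorem eno2_jump_bound (v : ℤ → ℝ) (i : ℤ) (h : Δ v i ≠ 0) :
    0 ≤ enoJump v i / Δ v i ∧ enoJump v i / Δ v i ≤ 2 := by
  have h1 : |enoSlope v i| ≤ |Δ v i| := by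
    unfold enoSlope
    split
    · next hlt => exact le_of_lt hlt
    · exact le_refl _
  have h2 : |enoSlope v (i + 1)| ≤ |Δ v i| := by
    unfold enoSlope
    have e : i + 1 - 1 = i := by ring
    rw [e]
    split
    · exact le_refl _
    · next hle => exact not_lt.mp hle
  have hs : |enoSlope v i + enoSlope v (i + 1)| ≤ 2 * |Δ v i| :=
    le_trans (abs_add_le _ _) (by linarith)
  rcases abs_le.mp hs with ⟨hl, hr⟩
  unfold enoJump
  set d := Δ v i with hd
  set s := enoSlope v i + enoSlope v (i + 1) with hsdef
  rcases lt_or_gt_of_ne h with hneg | hpos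
  · rw [abs_of_neg hneg] at hl hr
    constructor
    · apply div_nonneg_of_nonpos <;> linarith
    · rw [div_le_iff_of_neg hneg]; linarith
  · rw [abs_of_pos hpos] at hl hr
    constructor
    · apply div_nonneg <;> linarith
    · rw [div_le_iff₀ hpos]; linarith
end

section
/- The upper bound 2 on the ratio (v⁺_{i+1/2} − v⁻_{i+1/2})/Δv_i for second-order ENO on a uniform mesh is sharp: for every δ > 0 there exists a sequence (v_i) and index i with Δv_i ≠ 0 such that the ratio exceeds 2 − δ. -/
/-- The upper bound `2` on the relative interface jump of second-order ENO is sharp. -/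
theorem eno2_jump_bound_sharp :
    ∀ δ : ℝ, 0 < δ → ∃ (v : ℤ → ℝ) (i : ℤ),
      Δ v i ≠ 0 ∧ 2 - δ < enoJump v i / Δ v i := by
  intro δ hδ
  set ε : ℝ := min δ 1 / 2 with hε
  have hε0 : 0 < ε := by positivity
  have hε1 : ε < 1 := by
    have : min δ 1 ≤ 1 := min_le_right _ _
    simp only [hε]; linarith
  have hεδ : ε < δ := by
    have : min δ 1 ≤ δ := min_le_left _ _
    simp only [hε]; linarith
  set v : ℤ → ℝ := fun j => if j ≤ -1 then 1 - ε else if j = 0 then 0 else if j = 1 then 1 else ε with hv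
  have hd1 : Δ v (-1) = ε - 1 := by norm_num [Δ, hv]
  have hd0 : Δ v 0 = 1 := by norm_num [Δ, hv]
  have hd2 : Δ v 1 = ε - 1 := by norm_num [Δ, hv]
  have habs : |ε - 1| = 1 - ε := by rw [abs_of_neg (by linarith : ε - 1 < 0)]; ring
  have hs0 : enoSlope v 0 = ε - 1 := by
    rw [enoSlope]
    norm_num [hd1, hd0, habs]
    intro h; linarith
  have hs1 : enoSlope v 1 = ε - 1 := by
    rw [enoSlope]
    norm_num [hd0, hd2, habs]
    intro h; linarith
  refine ⟨v, 0, by rw [hd0]; norm_num, ?_⟩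
  rw [enoJump, hd0, hs0, show (0:ℤ) + 1 = 1 from rfl, hs1]
  field_simp
  linarith
end

section
/- If q is a polynomial of degree ≤ k−1 interpolating the averages (w̄_j) of a Lipschitz function over k consecutive cells of a uniform mesh of width h, then ‖q′‖_{L∞(I)} ≤ C on the union I of the stencil cells, where C depends only on k and the Lipschitz constant of w (not on h). -/
/-!
Rescale the stencil to the cells `[j, j + 1]`, `j < k`, through `p y = q (d + h y)`. For `p` of
degree `< k` the differences `∫_j^{j+1} p - ∫_0^1 p` all vanish only if `p' = 0`: otherwise `p`
minus a constant has zero integral, hence a root, on each of the `k` cells. As these differences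
form a linear map into a finite-dimensional space, `sup_{[0,k]} |p'|` is bounded by a constant
times their size. The Lipschitz bound on `w` makes them at most `L k h`, and `p' = h q'(d + h ·)`,
so the factor `h` cancels.
-/

open Polynomial Set intervalIntegral

theorem LinearMap.exists_norm_le_mul_norm_of_ker_le {𝕜 E F G : Type*} [NontriviallyNormedField 𝕜]
    [CompleteSpace 𝕜] [AddCommGroup E] [Module 𝕜 E]
    [NormedAddCommGroup F] [NormedSpace 𝕜 F] [FiniteDimensional 𝕜 F]
    [NormedAddCommGroup G] [NormedSpace 𝕜 G]
    (f : E →ₗ[𝕜] F) (g : E →ₗ[𝕜] G) (hfg : ker f ≤ ker g) :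
    ∃ C ≥ 0, ∀ x, ‖g x‖ ≤ C * ‖f x‖ := by
  let φ : range f →L[𝕜] G := LinearMap.toContinuousLinearMap
    ((ker f).liftQ g hfg ∘ₗ f.quotKerEquivRange.symm.toLinearMap)
  refine ⟨‖φ‖, norm_nonneg φ, fun x => ?_⟩
  have hφ : φ ⟨f x, mem_range_self f x⟩ = g x := by simp [φ]
  simpa [hφ] using φ.le_opNorm ⟨f x, mem_range_self f x⟩

theorem Continuous.exists_mem_Ioo_eq_zero_of_intervalIntegral_eq_zero {f : ℝ → ℝ}
    (hf : Continuous f) {a b : ℝ} (hab : a < b) (h : ∫ t in a..b, f t = 0) : ∃ c ∈ Ioo a b, f c = 0 := by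
  have hF (x : ℝ) : HasDerivAt (fun x => ∫ t in a..x, f t) (f x) x :=
    (hf.integral_hasStrictDerivAt a x).hasDerivAt
  exact exists_hasDerivAt_eq_zero hab (fun x _ => (hF x).continuousAt.continuousWithinAt)
    (by simp [h]) fun x _ => hF x

theorem LipschitzWith.norm_intervalIntegral_comp_add_right_sub_le {E : Type*}
    [NormedAddCommGroup E] [NormedSpace ℝ E] {w : ℝ → E} {L : NNReal} (hw : LipschitzWith L w)
    (a b δ : ℝ) : ‖(∫ t in a..b, w (t + δ)) - ∫ t in a..b, w t‖ ≤ L * |δ| * |b - a| := by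
  have hshift : Continuous fun t => w (t + δ) := hw.continuous.comp (continuous_add_const δ)
  rw [← integral_sub (hshift.intervalIntegrable a b) (hw.continuous.intervalIntegrable a b)]
  refine norm_integral_le_of_norm_le_const fun t _ => ?_
  simpa [← dist_eq_norm, Real.dist_eq] using hw.dist_le_mul (t + δ) t

namespace Polynomial

noncomputable def intervalIntegralₗ (a b : ℝ) : ℝ[X] →ₗ[ℝ] ℝ where
  toFun p := ∫ t in a..b, p.eval t
  map_add' p q := by
    simpa using
      integral_add (p.continuous.intervalIntegrable a b) (q.continuous.intervalIntegrable a b)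
  map_smul' c p := by simp

noncomputable def cellIntegralDiff (k : ℕ) : ℝ[X] →ₗ[ℝ] Fin k → ℝ :=
  LinearMap.pi fun j => intervalIntegralₗ j (j + 1) - intervalIntegralₗ 0 1

theorem cellIntegralDiff_apply (k : ℕ) (p : ℝ[X]) (j : Fin k) :
    cellIntegralDiff k p j = (∫ t in (j : ℝ)..j + 1, p.eval t) - ∫ t in (0 : ℝ)..1, p.eval t :=
  rfl

theorem intervalIntegral_eval_comp_C_mul_X_add_C (p : ℝ[X]) {h : ℝ} (hh : h ≠ 0) (d a b : ℝ) :
    ∫ t in a..b, (p.comp (C h * X + C d)).eval t = h⁻¹ * ∫ t in d + a * h..d + b * h, p.eval t := by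
  have heval (t : ℝ) : (p.comp (C h * X + C d)).eval t = p.eval (d + h * t) := by
    simp [add_comm]
  simp only [heval]
  rw [integral_comp_add_mul (fun t => p.eval t) hh, smul_eq_mul, mul_comm a, mul_comm b]

theorem eq_zero_of_intervalIntegral_eq_zero {p : ℝ[X]} {k : ℕ} (hp : p.degree < k)
    {x : ℕ → ℝ} (hx : StrictMono x) (h : ∀ j < k, ∫ t in x j..x (j + 1), p.eval t = 0) :
    p = 0 := by
  choose c hc hroot using fun j (hj : j < k) =>
    p.continuous.exists_mem_Ioo_eq_zero_of_intervalIntegral_eq_zero (hx j.lt_succ_self) (h j hj)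
  have hc_mono : StrictMono fun j : Fin k => c j j.2 := fun i j hij =>
    (hc i i.2).2.trans_le ((hx.monotone (Nat.succ_le_of_lt hij)).trans (hc j j.2).1.le)
  rcases eq_or_ne p 0 with rfl | hp0
  · rfl
  refine eq_zero_of_natDegree_lt_card_of_eval_eq_zero p hc_mono.injective
    (fun j => hroot j j.2) ?_
  simpa [natDegree_lt_iff_degree_lt hp0] using hp

theorem derivative_eq_zero_of_intervalIntegral_eq {p : ℝ[X]} {k : ℕ} (hp : p.degree < k) {c : ℝ}
    (h : ∀ j < k, ∫ t in (j : ℝ)..j + 1, p.eval t = c) : derivative p = 0 := by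
  rcases k.eq_zero_or_pos with rfl | hk
  · simp [show p = 0 by simpa using hp]
  have hpc : p - C c = 0 := by
    refine eq_zero_of_intervalIntegral_eq_zero (k := k) ?_ Nat.strictMono_cast fun j hj => ?_
    · exact (degree_sub_le _ _).trans_lt (max_lt hp (degree_C_le.trans_lt (by exact_mod_cast hk)))
    · simp [integral_sub (p.continuous.intervalIntegrable _ _) intervalIntegrable_const, h j hj]
  simpa [sub_eq_zero] using congrArg derivative hpc

theorem exists_abs_derivative_le_mul_norm_cellIntegralDiff (k : ℕ) :
    ∃ C ≥ 0, ∀ p : ℝ[X], p.degree < k → ∀ y ∈ Icc (0 : ℝ) k,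
      |p.derivative.eval y| ≤ C * ‖cellIntegralDiff k p‖ := by
  let f := (cellIntegralDiff k).domRestrict (degreeLT ℝ k)
  let g := ((toContinuousMapOnAlgHom (Icc (0 : ℝ) k)).toLinearMap ∘ₗ derivative).domRestrict
    (degreeLT ℝ k)
  have hker : LinearMap.ker f ≤ LinearMap.ker g := by
    rintro ⟨p, hp⟩ hf
    have hcell (j : ℕ) (hj : j < k) :
        ∫ t in (j : ℝ)..j + 1, p.eval t = ∫ t in (0 : ℝ)..1, p.eval t :=
      sub_eq_zero.1 (congrFun hf ⟨j, hj⟩)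
    rw [LinearMap.mem_ker]
    ext y
    simp [g, derivative_eq_zero_of_intervalIntegral_eq (mem_degreeLT.1 hp) hcell]
  obtain ⟨C, hC0, hC⟩ := LinearMap.exists_norm_le_mul_norm_of_ker_le f g hker
  refine ⟨C, hC0, fun p hp y hy => ?_⟩
  simpa [f, g] using (ContinuousMap.norm_coe_le_norm _ ⟨y, hy⟩).trans (hC ⟨p, mem_degreeLT.2 hp⟩)

theorem norm_cellIntegralDiff_comp_le {w : ℝ → ℝ} {L : NNReal} (hw : LipschitzWith L w)
    {k : ℕ} {h : ℝ} (hh : 0 < h) (d : ℝ) {q : ℝ[X]}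
    (hq : ∀ j : Fin k, ∫ t in d + j * h..d + (j + 1) * h, q.eval t =
      ∫ t in d + j * h..d + (j + 1) * h, w t) :
    ‖cellIntegralDiff k (q.comp (C h * X + C d))‖ ≤ L * k * h := by
  refine (pi_norm_le_iff_of_nonneg (by positivity)).2 fun j => ?_
  have hq0 := hq ⟨0, j.pos⟩
  simp only [Nat.cast_zero, zero_mul, add_zero, zero_add, one_mul] at hq0
  have hshift : ∫ t in d + j * h..d + (j + 1) * h, w t = ∫ t in d..d + h, w (t + j * h) := by
    rw [integral_comp_add_right]
    congr 1
    ring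
  have hj : (j : ℝ) ≤ k := by exact_mod_cast j.is_lt.le
  calc ‖cellIntegralDiff k (q.comp (C h * X + C d)) j‖
      = h⁻¹ * ‖(∫ t in d..d + h, w (t + j * h)) - ∫ t in d..d + h, w t‖ := by
        rw [cellIntegralDiff_apply, intervalIntegral_eval_comp_C_mul_X_add_C _ hh.ne',
          intervalIntegral_eval_comp_C_mul_X_add_C _ hh.ne', ← mul_sub, norm_mul, norm_inv,
          Real.norm_of_nonneg hh.le]
        simp [hq j, hq0, hshift]
    _ ≤ h⁻¹ * (L * |j * h| * |d + h - d|) := by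
        gcongr
        exact hw.norm_intervalIntegral_comp_add_right_sub_le _ _ _
    _ = L * j * h := by
        rw [add_sub_cancel_left, abs_of_pos hh, abs_of_nonneg (by positivity)]
        field_simp
    _ ≤ L * k * h := by gcongr

end Polynomial

theorem lipschitz_average_interpolant_derivative_bound_general (k : ℕ) (L : NNReal) :
    ∃ C : ℝ, ∀ (h : ℝ), 0 < h → ∀ (a : ℝ) (w : ℝ → ℝ), LipschitzWith L w →
      ∀ (s : ℤ) (q : Polynomial ℝ), q.degree < k →
        (∀ j : ℤ, s ≤ j → j ≤ s + k - 1 →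
          ∫ t in (a + ((j : ℝ) - 1) * h)..(a + (j : ℝ) * h), q.eval t =
          ∫ t in (a + ((j : ℝ) - 1) * h)..(a + (j : ℝ) * h), w t) →
        ∀ t ∈ Set.Icc (a + ((s : ℝ) - 1) * h) (a + ((s : ℝ) + k - 1) * h),
          |q.derivative.eval t| ≤ C := by
  obtain ⟨M, hM0, hM⟩ := exists_abs_derivative_le_mul_norm_cellIntegralDiff k
  refine ⟨M * (L * k), fun h hh a w hw s q hq havg t ht => ?_⟩
  set d := a + ((s : ℝ) - 1) * h
  set p := q.comp (C h * X + C d)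
  have hp : p.degree < k := by
    rwa [degree_comp (by rw [degree_linear hh.ne']; exact zero_lt_one), degree_linear hh.ne',
      mul_one]
  have hcells (j : Fin k) : ∫ t in d + j * h..d + (j + 1) * h, q.eval t =
      ∫ t in d + j * h..d + (j + 1) * h, w t := by
    convert havg (s + j) (by omega) (by omega) using 2 <;> push_cast <;> ring
  have hy : (t - d) / h ∈ Icc (0 : ℝ) k := by
    refine ⟨div_nonneg (sub_nonneg.2 ht.1) hh.le, ?_⟩
    rw [div_le_iff₀ hh]
    linarith [ht.2]
  have hderiv : p.derivative.eval ((t - d) / h) = h * q.derivative.eval t := by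
    simp [p, derivative_comp, mul_div_cancel₀ _ hh.ne']
  have hbound := (hM p hp _ hy).trans
    (mul_le_mul_of_nonneg_left (norm_cellIntegralDiff_comp_le hw hh d hcells) hM0)
  rw [hderiv, abs_mul, abs_of_pos hh] at hbound
  exact le_of_mul_le_mul_left (hbound.trans_eq (by ring)) hh

/-- If a polynomial `q` of degree ≤ k−1 interpolates the cell averages of an
`L`-Lipschitz function over `k` consecutive cells of a uniform mesh of width `h`
(cell `I_j = [a + (j−1)h, a + jh]`), then `|q′| ≤ C` on the union of the stencil
cells, where `C` depends only on `k` and `L` (not on `h`, `a`, `w`, `s` or `q`). -/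
theorem lipschitz_average_interpolant_derivative_bound (k : ℕ) (hk : 1 ≤ k) (L : NNReal) :
    ∃ C : ℝ, ∀ (h : ℝ), 0 < h → ∀ (a : ℝ) (w : ℝ → ℝ), LipschitzWith L w →
      ∀ (s : ℤ) (q : Polynomial ℝ), q.degree < k →
        (∀ j : ℤ, s ≤ j → j ≤ s + k - 1 →
          ∫ t in (a + ((j : ℝ) - 1) * h)..(a + (j : ℝ) * h), q.eval t =
          ∫ t in (a + ((j : ℝ) - 1) * h)..(a + (j : ℝ) * h), w t) →
        ∀ t ∈ Set.Icc (a + ((s : ℝ) - 1) * h) (a + ((s : ℝ) + k - 1) * h),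
          |q.derivative.eval t| ≤ C :=
  lipschitz_average_interpolant_derivative_bound_general k L
end
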